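/- Let (𝔙, 𝔙⁺, |·|) be a non-degenerate absolutely ordered 𝔉-bimodule. If 𝔳 ∈ 𝔙 and 𝔞 ∈ 𝔉 satisfies 𝔞*𝔞 = 𝔍_{o(𝔳)}, then |𝔞𝔳| = |𝔳|. -/

import Mathlib

noncomputable section

open scoped Matrix.Norms.L2Operator

/-! ### The *-algebra 𝔉 of ∞×∞ complex matrices with finitely many nonzero entries -/

/-- `∞ × ∞` complex matrices (indexed by `ℕ × ℕ`). -/
abbrev FMat := ℕ → ℕ → ℂ

/-- The matrix has (at most) finitely many nonzero entries: it is supported in some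
`n × n` top-left block. -/
def IsFin (a : FMat) : Prop := ∃ n, ∀ i j, (n ≤ i ∨ n ≤ j) → a i j = 0

/-- Matrix multiplication in `𝔉` (the `tsum` is a finite sum for finitely supported
matrices). -/
def fmul (a b : FMat) : FMat := fun i k => ∑' j, a i j * b j k

/-- The involution (conjugate transpose) on `𝔉`. -/
def fstar (a : FMat) : FMat := fun i j => starRingEnd ℂ (a j i)

/-- The matrix unit `𝔢_{i,j}`. -/
def eUnit (i j : ℕ) : FMat := fun k l => if k = i ∧ l = j then 1 else 0

/-- `𝔍ₙ = Σ_{i<n} 𝔢_{i,i}`, the partial identities. -/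
def JMat (n : ℕ) : FMat := fun k l => if k = l ∧ k < n then 1 else 0

/-- `𝔎ₙ = Σ_{i<n} 𝔢_{i,n+i}`, used for `2×2`-block constructions. -/
def KMat (n : ℕ) : FMat := fun k l => if l = k + n ∧ k < n then 1 else 0

/-- The diagonal idempotent `Σ_{i ∈ s} 𝔢_{i,i}` associated to a finite set `s ⊂ ℕ`. -/
def finsetDiag (s : Finset ℕ) : FMat := fun k l => if k = l ∧ k ∈ s then 1 else 0

/-- The operator norm on `𝔉`: the supremum of the (C*-algebra) operator norms of the
finite top-left blocks (for a finitely supported matrix the blocks stabilize). -/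
def fnorm (a : FMat) : ℝ :=
  ⨆ n : ℕ, ‖(Matrix.of fun i j : Fin n => a i j : Matrix (Fin n) (Fin n) ℂ)‖

/-- The order `o(𝔞)` of a finitely supported matrix: the least `n` such that `𝔞` is
supported in the top-left `n × n` block. -/
def matOrd (a : FMat) : ℕ := sInf {n | ∀ i j, (n ≤ i ∨ n ≤ j) → a i j = 0}

/-- A local unitary in `𝔉`: `𝔞*𝔞 = 𝔍_{o(𝔞)} = 𝔞𝔞*`. -/
def IsLocalUnitary (a : FMat) : Prop :=
  IsFin a ∧ fmul (fstar a) a = JMat (matOrd a) ∧ fmul a (fstar a) = JMat (matOrd a)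

/-! ### Non-degenerate *-𝔉-bimodules -/

/-- A non-degenerate `*`-`𝔉`-bimodule structure on a complex vector space `V`:
left and right actions of (finitely supported) infinite matrices together with an
involution, compatible with each other and with the complex scalars, such that every
element is `𝔍ₙ·v·𝔍ₙ` for some `n`. -/
structure FBimod (V : Type*) [AddCommGroup V] [Module ℂ V] where
  lsmul : FMat → V → V
  rsmul : V → FMat → V
  star : V → V
  lsmul_add : ∀ a u v, lsmul a (u + v) = lsmul a u + lsmul a v
  rsmul_add : ∀ u v b, rsmul (u + v) b = rsmul u b + rsmul v b
  add_lsmul : ∀ a b v, IsFin a → IsFin b → lsmul (a + b) v = lsmul a v + lsmul b v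
  rsmul_add' : ∀ v a b, IsFin a → IsFin b → rsmul v (a + b) = rsmul v a + rsmul v b
  smul_lsmul : ∀ (c : ℂ) a v, IsFin a → lsmul (c • a) v = c • lsmul a v
  smul_rsmul : ∀ (c : ℂ) v a, IsFin a → rsmul v (c • a) = c • rsmul v a
  mul_lsmul : ∀ a b v, IsFin a → IsFin b → lsmul (fmul a b) v = lsmul a (lsmul b v)
  rsmul_mul : ∀ v a b, IsFin a → IsFin b → rsmul v (fmul a b) = rsmul (rsmul v a) b
  lsmul_rsmul : ∀ a v b, IsFin a → IsFin b → rsmul (lsmul a v) b = lsmul a (rsmul v b)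
  star_add : ∀ u v, star (u + v) = star u + star v
  star_star : ∀ v, star (star v) = v
  star_lsmul : ∀ a v, IsFin a → star (lsmul a v) = rsmul (star v) (fstar a)
  star_rsmul : ∀ v a, IsFin a → star (rsmul v a) = lsmul (fstar a) (star v)
  smul_compat : ∀ (c : ℂ) (n : ℕ) v, lsmul (JMat n) (rsmul v (JMat n)) = v →
    lsmul (c • JMat n) v = c • v
  nondeg : ∀ v, ∃ n, lsmul (JMat n) (rsmul v (JMat n)) = v

namespace FBimod

variable {V : Type*} [AddCommGroup V] [Module ℂ V] (M : FBimod V)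

/-- `𝔍ₙ 𝔳 𝔍ₙ`. -/
def cut (n : ℕ) (v : V) : V := M.lsmul (JMat n) (M.rsmul v (JMat n))

/-- The order `o(𝔳)`: the smallest `n` with `𝔍ₙ 𝔳 𝔍ₙ = 𝔳`. -/
def ord (v : V) : ℕ := sInf {n | M.cut n v = v}

/-- `𝔞* 𝔳 𝔞`. -/
def conj (a : FMat) (v : V) : V := M.lsmul (fstar a) (M.rsmul v a)

/-- `C` is a bimodule cone: consists of self-adjoint elements, is closed under
addition and under `𝔳 ↦ 𝔞*𝔳𝔞` for `𝔞 ∈ 𝔉`. -/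
def IsCone (C : Set V) : Prop :=
  (∀ v ∈ C, M.star v = v) ∧ (∀ u ∈ C, ∀ v ∈ C, u + v ∈ C) ∧
    (∀ v ∈ C, ∀ a : FMat, IsFin a → M.conj a v ∈ C)

/-- The cone `C` is proper: `C ∩ (−C) = {0}`. -/
def ConeProper (C : Set V) : Prop := ∀ v ∈ C, -v ∈ C → v = 0

/-- The cone `C` is Archimedean. -/
def ConeArch (C : Set V) : Prop :=
  ∀ u ∈ C, ∀ v : V, M.star v = v → (∀ k : ℝ, 0 < k → (k : ℂ) • u + v ∈ C) → v ∈ C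

/-- The cone `C` is generating. -/
def ConeGen (C : Set V) : Prop :=
  ∀ v : V, ∃ v₀ ∈ C, ∃ v₁ ∈ C, ∃ v₂ ∈ C, ∃ v₃ ∈ C,
    v = v₀ + Complex.I • v₁ - v₂ - Complex.I • v₃

/-- `(𝔳₁, 𝔳₂)ₙ⁺ = 𝔳₁ + 𝔎ₙ* 𝔳₂ 𝔎ₙ` (the diagonal `2×2`-block `diag(𝔳₁,𝔳₂)`). -/
def pairPlus (n : ℕ) (v₁ v₂ : V) : V :=
  v₁ + M.lsmul (fstar (KMat n)) (M.rsmul v₂ (KMat n))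

/-- `saₙ(𝔳) = 𝔍ₙ 𝔳 𝔎ₙ + 𝔎ₙ* 𝔳* 𝔍ₙ` (the off-diagonal `2×2`-block of `𝔳`). -/
def san (n : ℕ) (v : V) : V :=
  M.lsmul (JMat n) (M.rsmul v (KMat n)) +
    M.lsmul (fstar (KMat n)) (M.rsmul (M.star v) (JMat n))

/-- `𝔲` and `𝔳` are `𝔉`-independent: compressed onto disjoint diagonal blocks. -/
def FIndep (u v : V) : Prop :=
  ∃ I J : Finset ℕ, Disjoint I J ∧
    M.lsmul (finsetDiag I) (M.rsmul u (finsetDiag I)) = u ∧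
    M.lsmul (finsetDiag J) (M.rsmul v (finsetDiag J)) = v

/-- `(𝔙, C, abs)` is a non-degenerate absolutely ordered `𝔉`-bimodule
(Definition 18 of the paper). -/
structure IsAbsOrd (C : Set V) (abs : V → V) : Prop where
  cone : M.IsCone C
  abs_mem : ∀ v, abs v ∈ C
  ord_abs_le : ∀ v, M.ord (abs v) ≤ M.ord v
  abs_of_mem : ∀ v ∈ C, abs v = v
  pos_part : ∀ v, M.pairPlus (M.ord v) (abs (M.star v)) (abs v) + M.san (M.ord v) v ∈ C
  abs_smul_le : ∀ (a b : FMat), IsFin a → IsFin b → ∀ v,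
    (fnorm a : ℂ) • abs (M.rsmul (abs v) b) - abs (M.lsmul a (M.rsmul v b)) ∈ C
  indep_add : ∀ u v, M.FIndep u v → abs (u + v) = abs u + abs v
  absorb : ∀ u ∈ C, ∀ v ∈ C, ∀ w ∈ C, abs (u - v) = u + v → v - w ∈ C →
    abs (u - w) = u + w
  ortho_pm : ∀ u ∈ C, ∀ v ∈ C, ∀ w ∈ C, abs (u - v) = u + v → abs (u - w) = u + w →
    abs (u - abs (v + w)) = u + abs (v + w) ∧ abs (u - abs (v - w)) = u + abs (v - w)

/-- `eⁿ = Σ_{i<n} 𝔢_{i,0} 𝔢 𝔢_{0,i}` for an element `𝔢` of order `1`. -/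
def epow (e : V) (n : ℕ) : V :=
  ∑ i ∈ Finset.range n, M.lsmul (eUnit i 0) (M.rsmul e (eUnit 0 i))

/-- `𝔢` is a local order unit for `(𝔙, C)`. -/
def IsLocalOrderUnit (C : Set V) (e : V) : Prop :=
  e ∈ C ∧ M.cut 1 e = e ∧ ∀ v : V, M.cut 1 v = v → ∃ k : ℝ, 0 < k ∧
    M.pairPlus 1 ((k : ℂ) • e) ((k : ℂ) • e) + M.san 1 v ∈ C

/-- `(𝔙, C, 𝔢)` is a local `𝔉`-order unit bimodule. -/
def IsLocalUnitBimod (C : Set V) (e : V) : Prop :=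
  M.IsCone C ∧ ConeProper C ∧ M.ConeArch C ∧ M.IsLocalOrderUnit C e

/-- The norm associated to a local order unit:
`‖𝔳‖ = inf { k > 0 : (k𝔢^{o(𝔳)}, k𝔢^{o(𝔳)})⁺_{o(𝔳)} + sa_{o(𝔳)}(𝔳) ∈ C }`. -/
def lnorm (C : Set V) (e : V) (v : V) : ℝ :=
  sInf {k : ℝ | 0 < k ∧
    M.pairPlus (M.ord v) ((k : ℂ) • M.epow e (M.ord v)) ((k : ℂ) • M.epow e (M.ord v)) +
      M.san (M.ord v) v ∈ C}

/-- `𝔲 ⊥_∞ 𝔳` with respect to the local-order-unit norm. -/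
def PerpInf (C : Set V) (e : V) (u v : V) : Prop :=
  ∀ k₁ k₂ : ℝ, M.lnorm C e ((k₁ : ℂ) • u + (k₂ : ℂ) • v) =
    max (M.lnorm C e ((k₁ : ℂ) • u)) (M.lnorm C e ((k₂ : ℂ) • v))

end FBimod
/-! ### Matrices over a complex *-vector space -/

section MatrixLevel

variable {V : Type*} [AddCommGroup V] [Module ℂ V] [StarAddMonoid V] [StarModule ℂ V]

/-- Conjugate transpose of a rectangular matrix over a `*`-vector space. -/
def mstar {m n : ℕ} (v : Matrix (Fin m) (Fin n) V) : Matrix (Fin n) (Fin m) V :=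
  fun i j => star (v j i)

/-- Left action of a scalar matrix: `(a v)_{ij} = Σ_k a_{ik} v_{kj}`. -/
def aSmul {r m n : ℕ} (a : Matrix (Fin r) (Fin m) ℂ) (v : Matrix (Fin m) (Fin n) V) :
    Matrix (Fin r) (Fin n) V :=
  fun i j => ∑ k, a i k • v k j

/-- Right action of a scalar matrix: `(v b)_{ij} = Σ_k b_{kj} • v_{ik}`. -/
def smulB {m n s : ℕ} (v : Matrix (Fin m) (Fin n) V) (b : Matrix (Fin n) (Fin s) ℂ) :
    Matrix (Fin m) (Fin s) V :=
  fun i j => ∑ k, b k j • v i k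

/-- Direct sum (block diagonal) of rectangular matrices over `V`. -/
def dsum {m n r s : ℕ} (v : Matrix (Fin m) (Fin n) V) (w : Matrix (Fin r) (Fin s) V) :
    Matrix (Fin (m + r)) (Fin (n + s)) V :=
  fun i j =>
    if hi : (i : ℕ) < m then
      (if hj : (j : ℕ) < n then v ⟨i, hi⟩ ⟨j, hj⟩ else 0)
    else
      (if hj : (j : ℕ) < n then 0
       else w ⟨(i : ℕ) - m, by have := i.isLt; omega⟩ ⟨(j : ℕ) - n, by have := j.isLt; omega⟩)

end MatrixLevel

/-- The L2-operator norm of a rectangular complex scalar matrix. -/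
def cnorm {r m : ℕ} (a : Matrix (Fin r) (Fin m) ℂ) : ℝ := ‖a‖

/-- Embedding of a finite rectangular complex matrix into `𝔉`. -/
def embC {r m : ℕ} (a : Matrix (Fin r) (Fin m) ℂ) : FMat :=
  fun i j => if hi : i < r then (if hj : j < m then a ⟨i, hi⟩ ⟨j, hj⟩ else 0) else 0

/-- `e ⊕ ⋯ ⊕ e`: the diagonal matrix with constant diagonal `e`. -/
def diagE {V : Type*} [AddCommGroup V] (e : V) (n : ℕ) : Matrix (Fin n) (Fin n) V :=
  Matrix.of fun i j => if i = j then e else 0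

/-! ### Absolutely matrix ordered spaces and absolute matrix order unit spaces -/

/-- An absolutely matrix ordered space structure on a complex `*`-vector space `V`:
matrix cones `Mₙ(V)⁺` and absolute values `|·|_{m,n} : M_{m,n}(V) → Mₙ(V)⁺`
(Definition 4.1 of Karn-Kumar). -/
structure AMOS (V : Type*) [AddCommGroup V] [Module ℂ V] [StarAddMonoid V]
    [StarModule ℂ V] where
  pos : ∀ n : ℕ, Set (Matrix (Fin n) (Fin n) V)
  abs : ∀ m n : ℕ, Matrix (Fin m) (Fin n) V → Matrix (Fin n) (Fin n) V
  pos_star : ∀ n, ∀ v ∈ pos n, mstar v = v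
  pos_add : ∀ n, ∀ u ∈ pos n, ∀ v ∈ pos n, u + v ∈ pos n
  pos_conj : ∀ m n (a : Matrix (Fin n) (Fin m) ℂ), ∀ v ∈ pos n,
    aSmul a.conjTranspose (smulB v a) ∈ pos m
  abs_mem : ∀ m n v, abs m n v ∈ pos n
  abs_of_pos : ∀ n, ∀ v ∈ pos n, abs n n v = v
  abs_add_self : ∀ n (v : Matrix (Fin n) (Fin n) V), mstar v = v →
    abs n n v + v ∈ pos n ∧ abs n n v - v ∈ pos n
  abs_real_smul : ∀ n (k : ℝ) (v : Matrix (Fin n) (Fin n) V), mstar v = v →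
    abs n n ((k : ℂ) • v) = ((|k| : ℝ) : ℂ) • abs n n v
  absorb : ∀ n, ∀ u ∈ pos n, ∀ v ∈ pos n, ∀ w ∈ pos n,
    abs n n (u - v) = u + v → v - w ∈ pos n → abs n n (u - w) = u + w
  ortho_pm : ∀ n, ∀ u ∈ pos n, ∀ v ∈ pos n, ∀ w ∈ pos n,
    abs n n (u - v) = u + v → abs n n (u - w) = u + w →
    abs n n (u - abs n n (v + w)) = u + abs n n (v + w) ∧
      abs n n (u - abs n n (v - w)) = u + abs n n (v - w)
  abs_smul_le : ∀ (r m n s : ℕ) (α : Matrix (Fin r) (Fin m) ℂ)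
    (v : Matrix (Fin m) (Fin n) V) (β : Matrix (Fin n) (Fin s) ℂ),
    (cnorm α : ℂ) • abs n s (smulB (abs m n v) β) - abs r s (aSmul α (smulB v β)) ∈ pos s
  abs_dsum : ∀ (m n r s : ℕ) (v : Matrix (Fin m) (Fin n) V) (w : Matrix (Fin r) (Fin s) V),
    abs (m + r) (n + s) (dsum v w) = dsum (abs m n v) (abs r s w)

/-- A matrix order unit structure on top of an absolutely matrix ordered space:
an order unit `e` with `V⁺` proper and each `Mₙ(V)⁺` Archimedean. -/
structure AMOUS (V : Type*) [AddCommGroup V] [Module ℂ V] [StarAddMonoid V]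
    [StarModule ℂ V] extends AMOS V where
  e : V
  e_pos : diagE e 1 ∈ pos 1
  proper : ∀ v ∈ pos 1, -v ∈ pos 1 → v = 0
  arch : ∀ n (v : Matrix (Fin n) (Fin n) V), mstar v = v →
    (∀ k : ℝ, 0 < k → (k : ℂ) • diagE e n + v ∈ pos n) →
    v ∈ pos n
  unit : ∀ n (v : Matrix (Fin n) (Fin n) V), mstar v = v →
    ∃ k : ℝ, 0 < k ∧ (k : ℂ) • diagE e n - v ∈ pos n ∧
      (k : ℂ) • diagE e n + v ∈ pos n

namespace AMOUS

variable {V : Type*} [AddCommGroup V] [Module ℂ V] [StarAddMonoid V] [StarModule ℂ V]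
variable (A : AMOUS V)

/-- `eⁿ = e ⊕ ⋯ ⊕ e ∈ Mₙ(V)`. -/
def eN (n : ℕ) : Matrix (Fin n) (Fin n) V := diagE A.e n

/-- The `2n × 2n` matrix `[[a, b], [c, d]]` of `n × n` blocks. -/
def block2 {n : ℕ} (a b c d : Matrix (Fin n) (Fin n) V) :
    Matrix (Fin (n + n)) (Fin (n + n)) V :=
  fun i j =>
    if hi : (i : ℕ) < n then
      (if hj : (j : ℕ) < n then a ⟨i, hi⟩ ⟨j, hj⟩
       else b ⟨i, hi⟩ ⟨(j : ℕ) - n, by have := j.isLt; omega⟩)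
    else
      (if hj : (j : ℕ) < n then c ⟨(i : ℕ) - n, by have := i.isLt; omega⟩ ⟨j, hj⟩
       else d ⟨(i : ℕ) - n, by have := i.isLt; omega⟩ ⟨(j : ℕ) - n, by have := j.isLt; omega⟩)

end AMOUS
namespace AMOUS

variable {V : Type*} [AddCommGroup V] [Module ℂ V] [StarAddMonoid V] [StarModule ℂ V]
variable (A : AMOUS V)

/-- The matrix norms of a matrix order unit space:
`‖v‖ₙ = inf { k > 0 : [[k eⁿ, v], [v*, k eⁿ]] ∈ M₂ₙ(V)⁺ }`. -/
def mnorm (n : ℕ) (v : Matrix (Fin n) (Fin n) V) : ℝ :=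
  sInf {k : ℝ | 0 < k ∧
    block2 ((k : ℂ) • A.eN n) v (mstar v) ((k : ℂ) • A.eN n) ∈ A.pos (n + n)}

/-- Orthogonality `u ⊥ v` (for positive elements): `|u − v| = u + v`. -/
def Perp {n : ℕ} (u v : Matrix (Fin n) (Fin n) V) : Prop :=
  A.abs n n (u - v) = u + v

/-- `u ⊥_∞ v`: `‖k₁ u + k₂ v‖ = max {‖k₁ u‖, ‖k₂ v‖}` for all real `k₁, k₂`. -/
def PerpInfM {n : ℕ} (u v : Matrix (Fin n) (Fin n) V) : Prop :=
  ∀ k₁ k₂ : ℝ, A.mnorm n ((k₁ : ℂ) • u + (k₂ : ℂ) • v) =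
    max (A.mnorm n ((k₁ : ℂ) • u)) (A.mnorm n ((k₂ : ℂ) • v))

/-- `u ⊥_∞^a v`: absolute `∞`-orthogonality. -/
def PerpInfA {n : ℕ} (u v : Matrix (Fin n) (Fin n) V) : Prop :=
  ∀ u₁ ∈ A.pos n, ∀ v₁ ∈ A.pos n, u - u₁ ∈ A.pos n → v - v₁ ∈ A.pos n → A.PerpInfM u₁ v₁

/-- `(V, {Mₙ(V)⁺}, {|·|}, e)` is an absolute matrix order unit space:
`⊥ = ⊥_∞^a` on each `Mₙ(V)⁺`. -/
def IsAbsolute : Prop :=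
  ∀ n, ∀ u ∈ A.pos n, ∀ v ∈ A.pos n, (A.Perp u v ↔ A.PerpInfA u v)

/-- `p` is an order projection in `Mₙ(V)`: `p* = p` and `|2p − eⁿ| = eⁿ`. -/
def IsOP (n : ℕ) (p : Matrix (Fin n) (Fin n) V) : Prop :=
  mstar p = p ∧ A.abs n n ((2 : ℂ) • p - A.eN n) = A.eN n

/-- `v ∈ M_{m,n}(V)` is a partial isometry: `|v|` and `|v*|` are order projections. -/
def IsPI {m n : ℕ} (v : Matrix (Fin m) (Fin n) V) : Prop :=
  A.IsOP n (A.abs m n v) ∧ A.IsOP m (A.abs n m (mstar v))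

end AMOUS

/-- An element of `M_∞(V)`: a matrix at some level `n`. -/
def OPE (V : Type*) : Type _ := Σ n : ℕ, Matrix (Fin n) (Fin n) V

namespace OPE

variable {V : Type*} [AddCommGroup V] [Module ℂ V] [StarAddMonoid V] [StarModule ℂ V]

/-- Direct sum in `M_∞(V)`. -/
def d (p q : OPE V) : OPE V := ⟨p.1 + q.1, dsum p.2 q.2⟩

/-- The zero order projection (at level 1). -/
def zero (V : Type*) [AddCommGroup V] : OPE V := ⟨1, 0⟩

end OPE

namespace AMOUS

variable {V : Type*} [AddCommGroup V] [Module ℂ V] [StarAddMonoid V] [StarModule ℂ V]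
variable (A : AMOUS V)

/-- Membership in `𝒪𝒫_∞(V)`. -/
def IsOPE (p : OPE V) : Prop := A.IsOP p.1 p.2

/-- `eⁿ` as an element of `𝒪𝒫_∞(V)`. -/
def eOPE (n : ℕ) : OPE V := ⟨n, A.eN n⟩

/-- Partial isometric equivalence `p ∼ q` of order projections: there is a partial
isometry `v` with `p = |v*|` and `q = |v|`. -/
def Sim (p q : OPE V) : Prop :=
  ∃ v : Matrix (Fin p.1) (Fin q.1) V,
    A.IsPI v ∧ p.2 = A.abs q.1 p.1 (mstar v) ∧ q.2 = A.abs p.1 q.1 v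

/-- Condition (T). -/
def CondT : Prop :=
  ∀ (m n l : ℕ) (u : Matrix (Fin m) (Fin n) V) (v : Matrix (Fin l) (Fin n) V),
    A.IsPI u → A.IsPI v → A.abs m n u = A.abs l n v →
    ∃ w : Matrix (Fin m) (Fin l) V, A.IsPI w ∧
      A.abs l m (mstar w) = A.abs n m (mstar u) ∧ A.abs m l w = A.abs n l (mstar v)

/-- Stabilized equivalence `p ≈ q`: `p ⊕ r ∼ q ⊕ r` for some order projection `r`. -/
def ASim (p q : OPE V) : Prop := ∃ r : OPE V, A.IsOPE r ∧ A.Sim (p.d r) (q.d r)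

/-- A pair of order projections, representing an element `[(p,q)]` of `K₀(V)`. -/
def IsOPPair (x : OPE V × OPE V) : Prop := A.IsOPE x.1 ∧ A.IsOPE x.2

/-- The relation `(p₁,q₁) ≡ (p₂,q₂) ↔ p₁ ⊕ q₂ ≈ p₂ ⊕ q₁` defining `K₀(V)`. -/
def Krel (x y : OPE V × OPE V) : Prop := A.ASim (x.1.d y.2) (y.1.d x.2)

/-- Addition of representatives of `K₀(V)` classes. -/
def kadd (x y : OPE V × OPE V) : OPE V × OPE V := (x.1.d y.1, x.2.d y.2)

/-- The representative of the zero class of `K₀(V)`. -/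
def kzero : OPE V × OPE V := (OPE.zero V, OPE.zero V)

/-- Representative-level membership in the cone `K₀(V)⁺ = {[(p,0)] : p ∈ 𝒪𝒫_∞(V)}`. -/
def KPos (x : OPE V × OPE V) : Prop :=
  ∃ p : OPE V, A.IsOPE p ∧ A.Krel x (p, OPE.zero V)

/-- Representative-level order `[x] ≤ [y]` in `K₀(V)`: `[y] − [x] ∈ K₀(V)⁺`. -/
def Kle (x y : OPE V × OPE V) : Prop :=
  ∃ r : OPE V, A.IsOPE r ∧ A.Krel (kadd x (r, OPE.zero V)) y

/-- The order projection `p ∈ Mₙ(V)` is finite: `q ∼ p` and `q ≥ p` imply `q = p`. -/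
def FiniteOP (n : ℕ) (p : Matrix (Fin n) (Fin n) V) : Prop :=
  ∀ q : Matrix (Fin n) (Fin n) V, A.IsOP n q → A.Sim ⟨n, q⟩ ⟨n, p⟩ →
    q - p ∈ A.pos n → q = p

end AMOUS

/-! ### Maps between absolute matrix order unit spaces -/

section Maps

variable {V W : Type*} [AddCommGroup V] [Module ℂ V] [StarAddMonoid V] [StarModule ℂ V]
  [AddCommGroup W] [Module ℂ W] [StarAddMonoid W] [StarModule ℂ W]

/-- The amplification `φₙ` (entrywise application) of a map. -/
def mmap (φ : V →ₗ[ℂ] W) {m n : ℕ} (v : Matrix (Fin m) (Fin n) V) :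
    Matrix (Fin m) (Fin n) W :=
  fun i j => φ (v i j)

/-- `φ` is completely `|·|`-preserving: every amplification `φₙ` is `|·|`-preserving. -/
def CAbsPres (A : AMOUS V) (B : AMOUS W) (φ : V →ₗ[ℂ] W) : Prop :=
  ∀ (n : ℕ) (v : Matrix (Fin n) (Fin n) V), B.abs n n (mmap φ v) = mmap φ (A.abs n n v)

/-- `φ` and `ψ` are completely orthogonal: `φₙ(u) ⊥ ψₙ(v)` for all positive `u, v`. -/
def COrth (A : AMOUS V) (B : AMOUS W) (φ ψ : V →ₗ[ℂ] W) : Prop :=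
  ∀ (n : ℕ) (u v : Matrix (Fin n) (Fin n) V), u ∈ A.pos n → v ∈ A.pos n →
    B.Perp (mmap φ u) (mmap ψ v)

/-- The image of an element of `M_∞(V)` under (the amplifications of) `φ`. -/
def mmapOPE (φ : V →ₗ[ℂ] W) (p : OPE V) : OPE W := ⟨p.1, mmap φ p.2⟩

/-- `F` represents a group homomorphism `K₀(V) → K₀(W)` making the `K₀` diagram of `φ`
commute: it maps `K₀`-representatives to `K₀`-representatives, respects the defining
relation `≡`, is additive, and satisfies `F([(p, 0)]) = [(φ(p), 0)]`. -/
def K0HomProp (A : AMOUS V) (B : AMOUS W) (φ : V →ₗ[ℂ] W)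
    (F : OPE V × OPE V → OPE W × OPE W) : Prop :=
  (∀ x, A.IsOPPair x → B.IsOPPair (F x)) ∧
  (∀ x y, A.IsOPPair x → A.IsOPPair y → A.Krel x y → B.Krel (F x) (F y)) ∧
  (∀ x y, A.IsOPPair x → A.IsOPPair y → B.Krel (F (AMOUS.kadd x y)) (AMOUS.kadd (F x) (F y))) ∧
  (∀ p : OPE V, A.IsOPE p → B.Krel (F (p, OPE.zero V)) (mmapOPE φ p, OPE.zero W))

/-- The completely bounded norm of `φ` with respect to the order unit matrix norms. -/
def cbNorm (A : AMOUS V) (B : AMOUS W) (φ : V →ₗ[ℂ] W) : ℝ :=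
  ⨆ n : ℕ, sInf {c : ℝ | 0 ≤ c ∧
    ∀ v : Matrix (Fin n) (Fin n) V, B.mnorm n (mmap φ v) ≤ c * A.mnorm n v}

end Maps

/-!
Suppose `𝔞*𝔞 = 𝔍ₙ` with `n = o(𝔳) > 0`. Every large enough top-left block `B` of `𝔞` satisfies
`BᴴB = 𝔍ₙ`, a nonzero projection, so `‖B‖ = 1`; smaller blocks are compressions of larger ones,
hence `‖𝔞‖ = ‖𝔞*‖ = 1`. The axiom `|𝔞𝔳𝔟| ≤ ‖𝔞‖ ||𝔳|𝔟|` with `𝔟 = 𝔍ₙ` then gives `|𝔞𝔳| ≤ |𝔳|`,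
and applied to `𝔞*` and `𝔞𝔳` (where `𝔞*𝔞𝔳 = 𝔍ₙ𝔳 = 𝔳`) it gives `|𝔳| ≤ |𝔞𝔳|`. The cone is
proper: the absorption axiom applied to `x, 0, x` with `x, -x ≥ 0` yields `|0| = 2x`.
If `o(𝔳) = 0` then `𝔳 = 𝔍₀𝔳𝔍₀ = 0`.
-/

namespace Matrix

variable {l m : Type*} [Fintype l] [Fintype m] [DecidableEq l] [DecidableEq m]

lemma l2_opNorm_one_le : ‖(1 : Matrix m m ℂ)‖ ≤ 1 := by
  rw [← diagonal_one, l2_opNorm_diagonal]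
  exact pi_norm_le_iff_of_nonneg zero_le_one |>.mpr fun _ => by simp

lemma l2_opNorm_submatrix_le {e : l → m} (he : Function.Injective e) (A : Matrix m m ℂ) :
    ‖A.submatrix e e‖ ≤ ‖A‖ := by
  set P : Matrix l m ℂ := (1 : Matrix m m ℂ).submatrix e id
  have hPA : P * A * Pᴴ = A.submatrix e e := by
    ext i j
    simp [P, mul_apply, one_apply]
  have hPP : P * Pᴴ = 1 := by
    ext i j
    simp [P, mul_apply, one_apply, he.eq_iff]
  have hP : ‖Pᴴ‖ ≤ 1 := by
    have h := l2_opNorm_conjTranspose_mul_self Pᴴ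
    rw [conjTranspose_conjTranspose, hPP] at h
    nlinarith [norm_nonneg Pᴴ, l2_opNorm_one_le (m := l)]
  calc ‖A.submatrix e e‖ = ‖P * A * Pᴴ‖ := by rw [hPA]
    _ ≤ ‖P‖ * ‖A‖ * ‖Pᴴ‖ := (l2_opNorm_mul _ _).trans <| by
        gcongr; exact l2_opNorm_mul _ _
    _ ≤ 1 * ‖A‖ * 1 := by
        rw [← l2_opNorm_conjTranspose P] at *
        gcongr
    _ = ‖A‖ := by ring

end Matrix

lemma isFin_zero : IsFin (0 : FMat) := ⟨0, fun _ _ _ => rfl⟩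

lemma fstar_zero : fstar 0 = 0 := by
  funext i j
  simp [fstar]

lemma isFin_JMat (n : ℕ) : IsFin (JMat n) :=
  ⟨n, fun i j hij => by rw [JMat, if_neg (by omega)]⟩

lemma IsFin.fstar {a : FMat} (ha : IsFin a) : IsFin (fstar a) := by
  obtain ⟨N, hN⟩ := ha
  exact ⟨N, fun i j hij => show starRingEnd ℂ (a j i) = 0 by rw [hN j i hij.symm, map_zero]⟩

lemma JMat_zero : JMat 0 = 0 := by
  funext k l
  simp [JMat]

lemma fmul_JMat_JMat (m n : ℕ) : fmul (JMat m) (JMat n) = JMat (min m n) := by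
  funext i k
  rw [fmul, tsum_eq_single i fun j hj => by simp [JMat, Ne.symm hj]]
  simp only [JMat]
  split_ifs <;> grind

section Blocks

open Matrix

-- `fnorm a` is definitionally `⨆ k, ‖fblock a k‖`.
def fblock (a : FMat) (k : ℕ) : Matrix (Fin k) (Fin k) ℂ :=
  Matrix.of fun i j => a i j

lemma fblock_fstar (a : FMat) (k : ℕ) : fblock (fstar a) k = (fblock a k)ᴴ := by
  ext i j
  simp [fblock, fstar, conjTranspose_apply]

lemma monotone_norm_fblock (a : FMat) : Monotone fun k => ‖fblock a k‖ := fun _ K h =>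
  l2_opNorm_submatrix_le (Fin.castLE_injective h) (fblock a K)

lemma fnorm_fstar (a : FMat) : fnorm (fstar a) = fnorm a := by
  refine congrArg iSup (funext fun _ => ?_)
  rw [← fblock, ← fblock, fblock_fstar, l2_opNorm_conjTranspose]

lemma fblock_fmul {a b : FMat} {K : ℕ} (ha : ∀ i j, K ≤ j → a i j = 0) :
    fblock (fmul a b) K = fblock a K * fblock b K := by
  ext i k
  rw [fblock, of_apply, fmul, tsum_eq_sum (s := Finset.range K)
    fun j hj => by rw [ha i j (by simpa using hj), zero_mul], ← Fin.sum_univ_eq_sum_range]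
  rfl

lemma norm_fblock_JMat {n K : ℕ} (hn : 0 < n) (hK : 0 < K) : ‖fblock (JMat n) K‖ = 1 := by
  have hdiag :
      fblock (JMat n) K = diagonal fun i : Fin K => if (i : ℕ) < n then (1 : ℂ) else 0 := by
    ext i j
    simp [fblock, JMat, diagonal_apply, Fin.ext_iff, ite_and]
  rw [hdiag, l2_opNorm_diagonal]
  refine le_antisymm (pi_norm_le_iff_of_nonneg zero_le_one |>.mpr fun i => ?_) ?_
  · split_ifs <;> simp
  · simpa [hn] using norm_le_pi_norm (fun i : Fin K => if (i : ℕ) < n then (1 : ℂ) else 0)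
      ⟨0, hK⟩

lemma Monotone.ciSup_eq_of_eventually_eq {f : ℕ → ℝ} (hf : Monotone f) {K : ℕ} {c : ℝ}
    (h : ∀ k, K ≤ k → f k = c) : ⨆ k, f k = c := by
  have hle : ∀ k, f k ≤ c := fun k => (hf (le_max_left k K)).trans_eq (h _ (le_max_right k K))
  exact le_antisymm (ciSup_le hle)
    ((h K le_rfl).symm.trans_le (le_ciSup ⟨c, Set.forall_mem_range.2 hle⟩ K))

lemma fnorm_eq_one {a : FMat} (ha : IsFin a) {n : ℕ} (hn : 0 < n)
    (haa : fmul (fstar a) a = JMat n) : fnorm a = 1 := by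
  obtain ⟨N, hN⟩ := ha.fstar
  refine (monotone_norm_fblock a).ciSup_eq_of_eventually_eq (K := max N n) fun K hK => ?_
  have hsq : ‖fblock a K‖ * ‖fblock a K‖ = 1 := by
    rw [← l2_opNorm_conjTranspose_mul_self, ← fblock_fstar,
      ← fblock_fmul fun i j hj => hN i j (.inr (by omega)), haa, norm_fblock_JMat hn (by omega)]
  nlinarith [norm_nonneg (fblock a K)]

end Blocks

namespace FBimod

variable {V : Type*} [AddCommGroup V] [Module ℂ V] (M : FBimod V)

lemma lsmul_zero (a : FMat) : M.lsmul a 0 = 0 := by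
  simpa using M.lsmul_add a 0 0

lemma zero_lsmul (w : V) : M.lsmul 0 w = 0 := by
  simpa using M.add_lsmul 0 0 w isFin_zero isFin_zero

lemma cut_ord (w : V) : M.cut (M.ord w) w = w :=
  Nat.sInf_mem (M.nondeg w)

lemma cut_cut (m n : ℕ) (w : V) : M.cut m (M.cut n w) = M.cut (min n m) w := by
  rw [cut, cut, cut, M.lsmul_rsmul _ _ _ (isFin_JMat n) (isFin_JMat m),
    ← M.rsmul_mul _ _ _ (isFin_JMat n) (isFin_JMat m),
    ← M.mul_lsmul _ _ _ (isFin_JMat m) (isFin_JMat n), fmul_JMat_JMat, fmul_JMat_JMat, min_comm m]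

lemma cut_of_le {m n : ℕ} (h : m ≤ n) {w : V} (hw : M.cut m w = w) : M.cut n w = w := by
  rw [← hw, cut_cut, min_eq_left h]

lemma lsmul_JMat_of_cut {n : ℕ} {w : V} (hw : M.cut n w = w) : M.lsmul (JMat n) w = w := by
  rw [← hw, cut, ← M.mul_lsmul _ _ _ (isFin_JMat n) (isFin_JMat n), fmul_JMat_JMat, min_self]

lemma rsmul_JMat_of_cut {n : ℕ} {w : V} (hw : M.cut n w = w) : M.rsmul w (JMat n) = w := by
  rw [← hw, cut, M.lsmul_rsmul _ _ _ (isFin_JMat n) (isFin_JMat n),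
    ← M.rsmul_mul _ _ _ (isFin_JMat n) (isFin_JMat n), fmul_JMat_JMat, min_self]

lemma eq_zero_of_ord_eq_zero {w : V} (hw : M.ord w = 0) : w = 0 := by
  rw [← M.cut_ord w, hw, cut, JMat_zero, zero_lsmul]

namespace IsAbsOrd

variable {M} {C : Set V} {abs : V → V}

lemma zero_mem (h : M.IsAbsOrd C abs) : (0 : V) ∈ C := by
  simpa [conj, fstar_zero, zero_lsmul] using h.cone.2.2 _ (h.abs_mem 0) 0 isFin_zero

lemma eq_zero_of_mem_of_neg_mem (h : M.IsAbsOrd C abs) {x : V} (hx : x ∈ C) (hnx : -x ∈ C) :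
    x = 0 := by
  have hxx := h.absorb x hx 0 h.zero_mem x hx (by rw [sub_zero, add_zero, h.abs_of_mem x hx])
    (by rwa [zero_sub])
  rw [sub_self, h.abs_of_mem 0 h.zero_mem, ← two_smul ℂ] at hxx
  exact (smul_eq_zero.mp hxx.symm).resolve_left two_ne_zero

lemma eq_of_sub_mem_of_sub_mem (h : M.IsAbsOrd C abs) {x y : V} (hxy : x - y ∈ C)
    (hyx : y - x ∈ C) : x = y :=
  sub_eq_zero.mp (h.eq_zero_of_mem_of_neg_mem hxy (by rwa [neg_sub]))

lemma fnorm_smul_abs_sub_abs_lsmul_mem (h : M.IsAbsOrd C abs) {a : FMat} (ha : IsFin a)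
    (v : V) : (fnorm a : ℂ) • abs v - abs (M.lsmul a v) ∈ C := by
  have hv := M.rsmul_JMat_of_cut (M.cut_ord v)
  have habs := M.rsmul_JMat_of_cut (M.cut_of_le (h.ord_abs_le v) (M.cut_ord (abs v)))
  simpa only [hv, habs, h.abs_of_mem _ (h.abs_mem v)] using
    h.abs_smul_le a (JMat (M.ord v)) ha (isFin_JMat _) v

end IsAbsOrd

end FBimod

/-- In a non-degenerate absolutely ordered `𝔉`-bimodule, if
`𝔞*𝔞 = 𝔍_{o(𝔳)}` then `|𝔞𝔳| = |𝔳|`. -/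
theorem statement1 {V : Type*} [AddCommGroup V] [Module ℂ V] (M : FBimod V) (C : Set V)
    (abs : V → V) (h : M.IsAbsOrd C abs) (v : V) (a : FMat) (ha : IsFin a)
    (haa : fmul (fstar a) a = JMat (M.ord v)) :
    abs (M.lsmul a v) = abs v := by
  rcases (M.ord v).eq_zero_or_pos with hv | hpos
  · rw [M.eq_zero_of_ord_eq_zero hv, M.lsmul_zero]
  have hnorm : fnorm a = 1 := fnorm_eq_one ha hpos haa
  have hinv : M.lsmul (fstar a) (M.lsmul a v) = v := by
    rw [← M.mul_lsmul _ _ _ ha.fstar ha, haa, M.lsmul_JMat_of_cut (M.cut_ord v)]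
  refine h.eq_of_sub_mem_of_sub_mem ?_ ?_
  · simpa [fnorm_fstar, hnorm, hinv] using
      h.fnorm_smul_abs_sub_abs_lsmul_mem ha.fstar (M.lsmul a v)
  · simpa [hnorm] using h.fnorm_smul_abs_sub_abs_lsmul_mem ha v
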